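/- One has lim_{m→∞} α_m(1) = 1. Consequently, if α_m(1) ≠ 0 for every m ∈ ℕ₀, then the sequence (1/α_m(1))_{m∈ℕ₀} is bounded: sup_{m∈ℕ₀} 1/|α_m(1)| < ∞. -/

import Mathlib

open Real Set MeasureTheory Filter

/-- The kernel `L_ℓ(r,s) = (1/(2ℓ+1))(r^{ℓ+1}/s^ℓ − s^{ℓ+1}/r^ℓ)`. -/
noncomputable def besselKer (ℓ r s : ℝ) : ℝ :=
  (1 / (2 * ℓ + 1)) * (r ^ (ℓ + 1) / s ^ ℓ - s ^ (ℓ + 1) / r ^ ℓ)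

/-- The iterates `ψ₀^ℓ(r) = r^{ℓ+1}`,
`ψ_k^ℓ(r) = ∫₀^r L_ℓ(r,s) V(s) ψ_{k−1}^ℓ(s) ds`. -/
noncomputable def sppsPsi (ℓ : ℝ) (V : ℝ → ℂ) : ℕ → ℝ → ℂ
  | 0 => fun r => ((r ^ (ℓ + 1) : ℝ) : ℂ)
  | k + 1 => fun r => ∫ s in Set.Ioc (0 : ℝ) r,
      ((besselKer ℓ r s : ℝ) : ℂ) * V s * sppsPsi ℓ V k s

/-- The regular solution `w_ℓ(r) = Σ_{k=0}^∞ ψ_k^ℓ(r)`. -/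
noncomputable def sppsW (ℓ : ℝ) (V : ℝ → ℂ) (r : ℝ) : ℂ :=
  ∑' k : ℕ, sppsPsi ℓ V k r

/-- `ℓ_m = m + (d−3)/2`. -/
noncomputable def ellm (d m : ℕ) : ℝ := (m : ℝ) + ((d : ℝ) - 3) / 2

/-- `α_m(r) = y_m(r)/r^{ℓ_m+1}` where `y_m = w_{ℓ_m}`. -/
noncomputable def alphaFun (d : ℕ) (V : ℝ → ℂ) (m : ℕ) (r : ℝ) : ℂ :=
  sppsW (ellm d m) V r / ((r ^ (ellm d m + 1) : ℝ) : ℂ)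

/-!
The Born series is dominated by a geometric one: for `2ℓ + 1 ≥ 0` and `0 < r ≤ 1`,
`‖ψ_k^ℓ(r)‖ ≤ r^{ℓ+1} q^k` with `q = (∫₀¹ s‖V(s)‖ ds)/(2ℓ+1)`, because the kernel is bounded by
`r^{ℓ+1}/((2ℓ+1) s^ℓ)`. Hence `‖w_ℓ(1) - 1‖ ≤ q/(1-q)`, which tends to `0` as `ℓ → ∞`, and
`ℓ_m → ∞`. A sequence tending to `1` has bounded reciprocals.
-/

open Topology

noncomputable def weightedNorm (V : ℝ → ℂ) : ℝ := ∫ s in Ioc 0 1, s * ‖V s‖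

lemma weightedNorm_nonneg (V : ℝ → ℂ) : 0 ≤ weightedNorm V :=
  setIntegral_nonneg measurableSet_Ioc fun _ hs => mul_nonneg hs.1.le (norm_nonneg _)

lemma alphaFun_one (d : ℕ) (V : ℝ → ℂ) (m : ℕ) : alphaFun d V m 1 = sppsW (ellm d m) V 1 := by
  rw [alphaFun, one_rpow, Complex.ofReal_one, div_one]

lemma tendsto_ellm_atTop (d : ℕ) : Tendsto (ellm d) atTop atTop :=
  tendsto_atTop_add_const_right _ _ tendsto_natCast_atTop_atTop

section BornSeries

variable {ℓ : ℝ} {V : ℝ → ℂ}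

lemma abs_besselKer_le (hℓ : 0 ≤ 2 * ℓ + 1) {r s : ℝ} (hs : 0 < s) (hsr : s ≤ r) :
    |besselKer ℓ r s| ≤ 1 / (2 * ℓ + 1) * (r ^ (ℓ + 1) / s ^ ℓ) := by
  have hr : 0 < r := hs.trans_le hsr
  -- both terms of the kernel are nonnegative and the second is the smaller: `s^{2ℓ+1} ≤ r^{2ℓ+1}`
  have hle : s ^ (ℓ + 1) / r ^ ℓ ≤ r ^ (ℓ + 1) / s ^ ℓ := by
    rw [div_le_div_iff₀ (rpow_pos_of_pos hr ℓ) (rpow_pos_of_pos hs ℓ), ← rpow_add hs,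
      ← rpow_add hr]
    exact rpow_le_rpow hs.le hsr (by linarith)
  have h₁ : 0 ≤ s ^ (ℓ + 1) / r ^ ℓ := by positivity
  rw [besselKer, abs_mul, abs_of_nonneg (by positivity : (0 : ℝ) ≤ 1 / (2 * ℓ + 1))]
  gcongr
  exact abs_sub_le_iff.2 ⟨by linarith, by linarith⟩

lemma norm_sppsPsi_succ_le (hℓ : 0 ≤ 2 * ℓ + 1) (hV : IntegrableOn (fun s => s * ‖V s‖) (Ioc 0 1))
    {k : ℕ} {M : ℝ} (hk : ∀ s ∈ Ioc (0 : ℝ) 1, ‖sppsPsi ℓ V k s‖ ≤ s ^ (ℓ + 1) * M)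
    {r : ℝ} (hr : r ∈ Ioc (0 : ℝ) 1) :
    ‖sppsPsi ℓ V (k + 1) r‖ ≤ r ^ (ℓ + 1) * M * (weightedNorm V / (2 * ℓ + 1)) := by
  have hM : 0 ≤ M := by simpa using (norm_nonneg _).trans (hk 1 ⟨one_pos, le_rfl⟩)
  set c := r ^ (ℓ + 1) * M / (2 * ℓ + 1)
  have hc : 0 ≤ c := div_nonneg (mul_nonneg (rpow_nonneg hr.1.le _) hM) hℓ
  have hsub : Ioc 0 r ⊆ Ioc (0 : ℝ) 1 := Ioc_subset_Ioc_right hr.2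
  -- the weight `r^{ℓ+1}/s^ℓ` of the kernel times `s^{ℓ+1}` from the iterate leaves `s`
  have hpt : ∀ s ∈ Ioc 0 r,
      ‖((besselKer ℓ r s : ℝ) : ℂ) * V s * sppsPsi ℓ V k s‖ ≤ c * (s * ‖V s‖) := by
    intro s hs
    have hs0 : 0 < s := hs.1
    calc ‖((besselKer ℓ r s : ℝ) : ℂ) * V s * sppsPsi ℓ V k s‖
        = |besselKer ℓ r s| * ‖V s‖ * ‖sppsPsi ℓ V k s‖ := by
          rw [norm_mul, norm_mul, Complex.norm_real, Real.norm_eq_abs]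
      _ ≤ 1 / (2 * ℓ + 1) * (r ^ (ℓ + 1) / s ^ ℓ) * ‖V s‖ * (s ^ (ℓ + 1) * M) := by
          have hK := abs_besselKer_le hℓ hs0 hs.2
          exact mul_le_mul (mul_le_mul_of_nonneg_right hK (norm_nonneg _)) (hk s (hsub hs))
            (norm_nonneg _) (mul_nonneg ((abs_nonneg _).trans hK) (norm_nonneg _))
      _ = c * (s * ‖V s‖) := by
          rw [rpow_add_one hs0.ne']
          field_simp [(rpow_pos_of_pos hs0 ℓ).ne']
          ring
  calc ‖sppsPsi ℓ V (k + 1) r‖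
      ≤ ∫ s in Ioc 0 r, ‖((besselKer ℓ r s : ℝ) : ℂ) * V s * sppsPsi ℓ V k s‖ :=
        norm_integral_le_integral_norm _
    _ ≤ ∫ s in Ioc 0 r, c * (s * ‖V s‖) :=
        integral_mono_of_nonneg (.of_forall fun _ => norm_nonneg _)
          ((hV.mono_set hsub).const_mul c) ((ae_restrict_iff' measurableSet_Ioc).2 (.of_forall hpt))
    _ ≤ ∫ s in Ioc 0 1, c * (s * ‖V s‖) :=
        setIntegral_mono_set (hV.const_mul c)
          ((ae_restrict_iff' measurableSet_Ioc).2 (.of_forall fun s hs =>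
            mul_nonneg hc (mul_nonneg hs.1.le (norm_nonneg _))))
          (.of_forall hsub)
    _ = r ^ (ℓ + 1) * M * (weightedNorm V / (2 * ℓ + 1)) := by
        rw [integral_const_mul, weightedNorm]; ring

lemma norm_sppsPsi_le (hℓ : 0 ≤ 2 * ℓ + 1) (hV : IntegrableOn (fun s => s * ‖V s‖) (Ioc 0 1))
    (k : ℕ) {r : ℝ} (hr : r ∈ Ioc (0 : ℝ) 1) :
    ‖sppsPsi ℓ V k r‖ ≤ r ^ (ℓ + 1) * (weightedNorm V / (2 * ℓ + 1)) ^ k := by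
  induction k generalizing r with
  | zero => simp [sppsPsi, abs_of_nonneg (rpow_nonneg hr.1.le _)]
  | succ k ih => simpa only [pow_succ, mul_assoc] using norm_sppsPsi_succ_le hℓ hV (fun _ hs => ih hs) hr

lemma norm_sppsW_one_sub_one_le (hℓ : 0 ≤ 2 * ℓ + 1)
    (hV : IntegrableOn (fun s => s * ‖V s‖) (Ioc 0 1)) (hq : weightedNorm V / (2 * ℓ + 1) < 1) :
    ‖sppsW ℓ V 1 - 1‖ ≤ weightedNorm V / (2 * ℓ + 1) / (1 - weightedNorm V / (2 * ℓ + 1)) := by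
  set q := weightedNorm V / (2 * ℓ + 1)
  have hq0 : 0 ≤ q := div_nonneg (weightedNorm_nonneg V) hℓ
  have hbound (k : ℕ) : ‖sppsPsi ℓ V k 1‖ ≤ q ^ k := by
    simpa using norm_sppsPsi_le hℓ hV k ⟨one_pos, le_rfl⟩
  have hsum : Summable (sppsPsi ℓ V · 1) :=
    .of_norm_bounded (summable_geometric_of_lt_one hq0 hq) hbound
  have htail : sppsW ℓ V 1 - 1 = ∑' k, sppsPsi ℓ V (k + 1) 1 := by
    rw [sppsW, hsum.tsum_eq_zero_add]
    simp [sppsPsi]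
  rw [htail, div_eq_mul_inv]
  exact tsum_of_norm_bounded ((hasSum_geometric_of_lt_one hq0 hq).mul_left q)
    fun k => pow_succ' q k ▸ hbound (k + 1)

theorem tendsto_sppsW_one (hV : IntegrableOn (fun s => s * ‖V s‖) (Ioc 0 1)) :
    Tendsto (fun ℓ => sppsW ℓ V 1) atTop (𝓝 1) := by
  have hden : Tendsto (fun ℓ : ℝ => 2 * ℓ + 1) atTop atTop :=
    tendsto_atTop_add_const_right _ _ (tendsto_id.const_mul_atTop two_pos)
  have hq : Tendsto (fun ℓ : ℝ => weightedNorm V / (2 * ℓ + 1)) atTop (𝓝 0) :=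
    tendsto_const_nhds.div_atTop hden
  have hbound : Tendsto (fun ℓ : ℝ => weightedNorm V / (2 * ℓ + 1) /
      (1 - weightedNorm V / (2 * ℓ + 1))) atTop (𝓝 0) := by
    rw [show (0 : ℝ) = 0 / (1 - 0) by simp]
    exact hq.div (tendsto_const_nhds.sub hq) (by norm_num)
  rw [tendsto_iff_norm_sub_tendsto_zero]
  refine squeeze_zero' (.of_forall fun _ => norm_nonneg _) ?_ hbound
  filter_upwards [hden.eventually_ge_atTop 0, hq.eventually_lt_const one_pos] with ℓ hℓ hq
  exact norm_sppsW_one_sub_one_le hℓ hV hq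

end BornSeries

theorem alphaFun_one_tendsto_general (d : ℕ) (V : ℝ → ℂ)
    (hV : IntegrableOn (fun s : ℝ => s * ‖V s‖) (Set.Ioc 0 1)) :
    Filter.Tendsto (fun m : ℕ => alphaFun d V m 1) Filter.atTop (nhds 1) ∧
    ((∀ m : ℕ, alphaFun d V m 1 ≠ 0) →
      ∃ C : ℝ, ∀ m : ℕ, 1 / ‖alphaFun d V m 1‖ ≤ C) := by
  have htend : Tendsto (fun m => alphaFun d V m 1) atTop (𝓝 1) := by
    simp_rw [alphaFun_one]
    exact (tendsto_sppsW_one hV).comp (tendsto_ellm_atTop d)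
  refine ⟨htend, fun _ => ?_⟩
  have hinv : Tendsto (fun m => 1 / ‖alphaFun d V m 1‖) atTop (𝓝 1) := by
    simpa using htend.norm.inv₀ (by simp)
  obtain ⟨C, hC⟩ := hinv.bddAbove_range
  exact ⟨C, fun m => hC ⟨m, rfl⟩⟩

/-- `α_m(1) → 1` as `m → ∞`; consequently, if `α_m(1) ≠ 0` for every `m`, then the
sequence `(1/α_m(1))` is bounded. -/
theorem alphaFun_one_tendsto (d : ℕ) (hd : 3 ≤ d) (V : ℝ → ℂ) (hVmeas : Measurable V)
    (hV : IntegrableOn (fun s : ℝ => s * ‖V s‖) (Set.Ioc 0 1)) :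
    Filter.Tendsto (fun m : ℕ => alphaFun d V m 1) Filter.atTop (nhds 1) ∧
    ((∀ m : ℕ, alphaFun d V m 1 ≠ 0) →
      ∃ C : ℝ, ∀ m : ℕ, 1 / ‖alphaFun d V m 1‖ ≤ C) :=
  alphaFun_one_tendsto_general d V hV
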